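/- For every integer n ≥ 0, the largest eigenvalue λ₁ of the adjacency matrix A(R̃_n) satisfies (n+1)(n+4)/(n+3) ≤ λ₁ ≤ n+2. -/

import Mathlib

/-- The 5-cycle `C₅` on `Fin 5`. -/
def cycle5 : SimpleGraph (Fin 5) :=
  SimpleGraph.fromRel (fun i j => j = i + 1)

instance : DecidableRel cycle5.Adj := fun i j =>
  decidable_of_iff (i ≠ j ∧ (j = i + 1 ∨ i = j + 1)) Iff.rfl

/-- Duplicating the vertex `v'` of a simple graph `G`: a new vertex (the `Sum.inr` vertex) is
added, adjacent to `v'` and to every neighbor of `v'` in `G`. -/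
def dupGraph {V : Type*} (G : SimpleGraph V) (v' : V) : SimpleGraph (V ⊕ Unit) where
  Adj x y :=
    match x, y with
    | Sum.inl a, Sum.inl b => G.Adj a b
    | Sum.inl a, Sum.inr _ => a = v' ∨ G.Adj a v'
    | Sum.inr _, Sum.inl b => b = v' ∨ G.Adj b v'
    | Sum.inr _, Sum.inr _ => False
  symm := by
    refine ⟨?_⟩
    rintro (a | a) (b | b) h
    · exact G.adj_symm h
    · exact h
    · exact h
    · exact h.elim
  loopless := by
    refine ⟨?_⟩
    rintro (a | a) h
    · exact G.irrefl h
    · exact h.elim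

instance dupGraphAdjDecidable {V : Type*} [DecidableEq V] (G : SimpleGraph V)
    [DecidableRel G.Adj] (v' : V) : DecidableRel (dupGraph G v').Adj := fun x y =>
  match x, y with
  | Sum.inl a, Sum.inl b => inferInstanceAs (Decidable (G.Adj a b))
  | Sum.inl a, Sum.inr _ => inferInstanceAs (Decidable (a = v' ∨ G.Adj a v'))
  | Sum.inr _, Sum.inl b => inferInstanceAs (Decidable (b = v' ∨ G.Adj b v'))
  | Sum.inr _, Sum.inr _ => inferInstanceAs (Decidable False)

/-- The vertex type of the reseminant graph built from `C₅` by the duplications recorded in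
the list `l` (each entry records which of the five original cycle vertices is duplicated). -/
def resemType : List (Fin 5) → Type
  | [] => Fin 5
  | _ :: l => resemType l ⊕ Unit

instance resemTypeFintype : ∀ l : List (Fin 5), Fintype (resemType l)
  | [] => inferInstanceAs (Fintype (Fin 5))
  | _ :: l => letI := resemTypeFintype l; inferInstanceAs (Fintype (resemType l ⊕ Unit))

instance resemTypeDecEq : ∀ l : List (Fin 5), DecidableEq (resemType l)
  | [] => inferInstanceAs (DecidableEq (Fin 5))
  | _ :: l => letI := resemTypeDecEq l; inferInstanceAs (DecidableEq (resemType l ⊕ Unit))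

/-- The copy, inside `resemType l`, of an original vertex of the 5-cycle. -/
def origVert : (l : List (Fin 5)) → Fin 5 → resemType l
  | [], i => i
  | _ :: l, i => Sum.inl (origVert l i)

/-- The reseminant graph obtained from the 5-cycle `C₅` by the finite sequence of vertex
duplications recorded in `l`: for `l = v :: l'`, the vertex (the copy of the original cycle
vertex) `v` is duplicated in the graph built from `l'`. -/
def resemGraph : (l : List (Fin 5)) → SimpleGraph (resemType l)
  | [] => cycle5
  | v :: l => dupGraph (resemGraph l) (origVert l v)

instance resemGraphAdjDecidable : ∀ l : List (Fin 5), DecidableRel (resemGraph l).Adj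
  | [] => inferInstanceAs (DecidableRel cycle5.Adj)
  | v :: l =>
    letI := resemGraphAdjDecidable l
    inferInstanceAs (DecidableRel (dupGraph (resemGraph l) (origVert l v)).Adj)

/-- A simple graph is *reseminant* if it is (isomorphic to) a graph obtained from the 5-cycle
`C₅` by a finite sequence of vertex duplications, each duplicating one of the five original
cycle vertices. -/
def IsReseminant {V : Type*} (Γ : SimpleGraph V) : Prop :=
  ∃ l : List (Fin 5), Nonempty (Γ ≃g resemGraph l)

/-- `R̃_n`: the reseminant graph on `n + 5` vertices obtained from `C₅` by `n` successive
duplications, all duplicating the same fixed vertex `0` of the original 5-cycle. -/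
def tildeR (n : ℕ) : SimpleGraph (resemType (List.replicate n 0)) :=
  resemGraph (List.replicate n 0)

instance (n : ℕ) : DecidableRel (tildeR n).Adj :=
  resemGraphAdjDecidable (List.replicate n 0)

/-!
The largest eigenvalue of a real symmetric matrix bounds its Rayleigh quotient from above. For
the lower bound, take the indicator vector `x` of the clique `K_{n+1}` formed by the cycle vertex
`0` and its `n` copies, together with the two cycle neighbours `1` and `4` of `0`: then
`x ⬝ x = n + 3` and `x ⬝ A x = (n + 1)(n + 4)`. For the upper bound, Gershgorin's theorem bounds
every eigenvalue of an adjacency matrix by the maximum degree, and a duplication raises the maximum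
degree by at most one, starting from `2` for `C₅`.
-/

open Matrix Finset SimpleGraph

namespace Matrix.IsHermitian

variable {n : Type*} [Fintype n] [DecidableEq n] {A : Matrix n n ℝ}

theorem exists_isRoot_charpoly_forall_le [Nonempty n] (hA : A.IsHermitian) :
    ∃ lam, A.charpoly.IsRoot lam ∧ ∀ μ, A.charpoly.IsRoot μ → μ ≤ lam := by
  simp_rw [← mem_spectrum_iff_isRoot_charpoly, hA.spectrum_real_eq_range_eigenvalues]
  obtain ⟨i, -, hi⟩ := exists_max_image univ hA.eigenvalues univ_nonempty
  exact ⟨_, ⟨i, rfl⟩, by rintro _ ⟨j, rfl⟩; exact hi j (mem_univ j)⟩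

open scoped MatrixOrder in
theorem dotProduct_mulVec_le_of_isRoot_charpoly_le (hA : A.IsHermitian) {r : ℝ}
    (hr : ∀ μ, A.charpoly.IsRoot μ → μ ≤ r) (x : n → ℝ) :
    x ⬝ᵥ (A *ᵥ x) ≤ r * (x ⬝ᵥ x) := by
  have hle : A ≤ algebraMap ℝ _ r :=
    le_algebraMap_of_spectrum_le (fun μ hμ => hr μ (mem_spectrum_iff_isRoot_charpoly.mp hμ)) hA
  simpa [Algebra.algebraMap_eq_smul_one, sub_mulVec, dotProduct_sub, smul_mulVec,
    dotProduct_smul] using (Matrix.le_iff.mp hle).dotProduct_mulVec_nonneg x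

end Matrix.IsHermitian

namespace SimpleGraph

variable {V : Type*} [Fintype V] [DecidableEq V] (G : SimpleGraph V) [DecidableRel G.Adj]

theorem filter_eq_or_adj_eq_insert_neighborFinset (v : V) :
    univ.filter (fun a => a = v ∨ G.Adj a v) = insert v (G.neighborFinset v) := by
  ext a
  simp [adj_comm]

theorem le_maxDegree_of_isRoot_charpoly_adjMatrix {μ : ℝ}
    (hμ : (G.adjMatrix ℝ).charpoly.IsRoot μ) : μ ≤ G.maxDegree := by
  have hμ' : Module.End.HasEigenvalue (toLin' (G.adjMatrix ℝ)) μ := by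
    rw [Module.End.hasEigenvalue_iff_mem_spectrum, spectrum_toLin']
    exact mem_spectrum_iff_isRoot_charpoly.mpr hμ
  obtain ⟨k, hk⟩ := eigenvalue_mem_ball hμ'
  have hrow : ∑ j ∈ univ.erase k, ‖G.adjMatrix ℝ k j‖ = G.degree k := by
    rw [sum_erase _ (by simp), ← card_neighborFinset_eq_degree, neighborFinset_eq_filter]
    simp [adjMatrix_apply, apply_ite]
  rw [Metric.mem_closedBall, Real.dist_eq, hrow] at hk
  calc μ ≤ |μ - G.adjMatrix ℝ k k| := by simpa using le_abs_self μ
    _ ≤ G.degree k := hk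
    _ ≤ G.maxDegree := by exact_mod_cast G.degree_le_maxDegree k

end SimpleGraph

section dupGraph
variable {V : Type*} (G : SimpleGraph V) (v' : V)

@[simp] theorem dupGraph_adj_inl_inl {a b : V} :
    (dupGraph G v').Adj (.inl a) (.inl b) ↔ G.Adj a b :=
  Iff.rfl

@[simp] theorem dupGraph_adj_inl_inr {a : V} {u : Unit} :
    (dupGraph G v').Adj (.inl a) (.inr u) ↔ a = v' ∨ G.Adj a v' :=
  Iff.rfl

variable [Fintype V] [DecidableEq V] [DecidableRel G.Adj]

theorem neighborFinset_dupGraph_inl (a : V) :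
    (dupGraph G v').neighborFinset (.inl a) =
      if a = v' ∨ G.Adj a v' then insert (.inr ()) ((G.neighborFinset a).map .inl)
      else (G.neighborFinset a).map .inl := by
  ext (b | b) <;> split_ifs with h <;> simp [h]

theorem neighborFinset_dupGraph_inr (u : Unit) :
    (dupGraph G v').neighborFinset (.inr u) = (insert v' (G.neighborFinset v')).map .inl := by
  ext (b | b) <;> simp [adj_comm]

theorem degree_dupGraph_inl_le (a : V) : (dupGraph G v').degree (.inl a) ≤ G.degree a + 1 := by
  rw [← card_neighborFinset_eq_degree, neighborFinset_dupGraph_inl,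
    ← card_neighborFinset_eq_degree]
  split_ifs
  · exact (card_insert_le _ _).trans (by simp)
  · simp

theorem degree_dupGraph_inr (u : Unit) : (dupGraph G v').degree (.inr u) = G.degree v' + 1 := by
  rw [← card_neighborFinset_eq_degree, neighborFinset_dupGraph_inr, card_map,
    card_insert_of_notMem (by simp), card_neighborFinset_eq_degree]

theorem maxDegree_dupGraph_le : (dupGraph G v').maxDegree ≤ G.maxDegree + 1 := by
  refine maxDegree_le_of_forall_degree_le _ _ fun
    | .inl a => (degree_dupGraph_inl_le G v' a).trans (by grw [G.degree_le_maxDegree a])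
    | .inr u => (degree_dupGraph_inr G v' u).trans_le (by grw [G.degree_le_maxDegree v'])

variable (x : V → ℝ) (c : ℝ)

theorem adjMatrix_dupGraph_mulVec_inl (a : V) :
    ((dupGraph G v').adjMatrix ℝ *ᵥ Sum.elim x fun _ => c) (.inl a) =
      (G.adjMatrix ℝ *ᵥ x) a + if a = v' ∨ G.Adj a v' then c else 0 := by
  rw [adjMatrix_mulVec_apply, neighborFinset_dupGraph_inl, adjMatrix_mulVec_apply]
  split_ifs <;> simp [add_comm]

theorem adjMatrix_dupGraph_mulVec_inr (u : Unit) :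
    ((dupGraph G v').adjMatrix ℝ *ᵥ Sum.elim x fun _ => c) (.inr u) =
      x v' + (G.adjMatrix ℝ *ᵥ x) v' := by
  rw [adjMatrix_mulVec_apply, neighborFinset_dupGraph_inr, adjMatrix_mulVec_apply, sum_map,
    sum_insert (by simp)]
  simp

theorem dotProduct_adjMatrix_dupGraph_mulVec :
    (Sum.elim x fun _ => c) ⬝ᵥ ((dupGraph G v').adjMatrix ℝ *ᵥ Sum.elim x fun _ => c) =
      x ⬝ᵥ (G.adjMatrix ℝ *ᵥ x) + 2 * c * (x v' + (G.adjMatrix ℝ *ᵥ x) v') := by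
  have hcross : ∑ a, x a * (if a = v' ∨ G.Adj a v' then c else 0) =
      c * (x v' + (G.adjMatrix ℝ *ᵥ x) v') := by
    simp_rw [mul_ite, mul_zero, ← sum_filter, filter_eq_or_adj_eq_insert_neighborFinset,
      sum_insert (G.notMem_neighborFinset_self v'), adjMatrix_mulVec_apply, mul_add, mul_sum,
      mul_comm]
  rw [dotProduct, Fintype.sum_sum_type]
  simp only [Sum.elim_inl, Sum.elim_inr, adjMatrix_dupGraph_mulVec_inl,
    adjMatrix_dupGraph_mulVec_inr, mul_add, sum_add_distrib, hcross]
  simp [dotProduct]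
  ring

end dupGraph

theorem maxDegree_tildeR_le (n : ℕ) : (tildeR n).maxDegree ≤ n + 2 := by
  induction n with
  | zero => exact maxDegree_le_of_forall_degree_le _ _ (by decide)
  | succ n ih => exact (maxDegree_dupGraph_le (tildeR n) _).trans (by omega)

def tildeRTestVector : (n : ℕ) → resemType (List.replicate n 0) → ℝ
  | 0 => ![1, 1, 0, 0, 1]
  | n + 1 => Sum.elim (tildeRTestVector n) fun _ => 1

theorem tildeRTestVector_origVert_zero (n : ℕ) :
    tildeRTestVector n (origVert (List.replicate n 0) 0) = 1 := by
  induction n with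
  | zero => rfl
  | succ n ih => exact ih

theorem dotProduct_tildeRTestVector_self (n : ℕ) :
    tildeRTestVector n ⬝ᵥ tildeRTestVector n = n + 3 := by
  induction n with
  | zero =>
    change ![1, 1, 0, 0, 1] ⬝ᵥ ![1, 1, 0, 0, 1] = _
    simp [dotProduct, Fin.sum_univ_five]
    norm_num
  | succ n ih =>
    refine (sumElim_dotProduct_sumElim _ _ (fun _ : Unit => (1 : ℝ)) _).trans ?_
    simp [ih]
    ring

theorem adjMatrix_tildeR_mulVec_tildeRTestVector_origVert_zero (n : ℕ) :
    ((tildeR n).adjMatrix ℝ *ᵥ tildeRTestVector n) (origVert (List.replicate n 0) 0) =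
      n + 2 := by
  induction n with
  | zero =>
    change (cycle5.adjMatrix ℝ *ᵥ ![1, 1, 0, 0, 1]) 0 = _
    simp +decide [mulVec, dotProduct, Fin.sum_univ_five, adjMatrix_apply]
    norm_num
  | succ n ih =>
    refine (adjMatrix_dupGraph_mulVec_inl (tildeR n) _ (tildeRTestVector n) 1 _).trans ?_
    simp [ih]
    ring

theorem dotProduct_adjMatrix_tildeR_mulVec_tildeRTestVector (n : ℕ) :
    tildeRTestVector n ⬝ᵥ ((tildeR n).adjMatrix ℝ *ᵥ tildeRTestVector n) =
      (n + 1) * (n + 4) := by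
  induction n with
  | zero =>
    change ![1, 1, 0, 0, 1] ⬝ᵥ (cycle5.adjMatrix ℝ *ᵥ ![1, 1, 0, 0, 1]) = _
    simp +decide [mulVec, dotProduct, Fin.sum_univ_five, adjMatrix_apply]
    norm_num
  | succ n ih =>
    refine (dotProduct_adjMatrix_dupGraph_mulVec (tildeR n) _ (tildeRTestVector n) 1).trans ?_
    rw [ih, tildeRTestVector_origVert_zero, adjMatrix_tildeR_mulVec_tildeRTestVector_origVert_zero]
    push_cast; ring

/-- For every integer `n ≥ 0`, the largest eigenvalue `λ₁` of the adjacency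
matrix `A(R̃_n)` (the largest root of its characteristic polynomial; all eigenvalues are real
since the matrix is symmetric) satisfies `(n+1)(n+4)/(n+3) ≤ λ₁ ≤ n+2`. -/
theorem largest_eigenvalue_tildeR_bounds (n : ℕ) :
    ∃ lam : ℝ, ((tildeR n).adjMatrix ℝ).charpoly.IsRoot lam ∧
      (∀ mu : ℝ, ((tildeR n).adjMatrix ℝ).charpoly.IsRoot mu → mu ≤ lam) ∧
      ((n : ℝ) + 1) * ((n : ℝ) + 4) / ((n : ℝ) + 3) ≤ lam ∧ lam ≤ (n : ℝ) + 2 := by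
  have : Nonempty (resemType (List.replicate n 0)) := ⟨origVert _ 0⟩
  have hA := (tildeR n).isHermitian_adjMatrix ℝ
  obtain ⟨lam, hroot, hmax⟩ := hA.exists_isRoot_charpoly_forall_le
  refine ⟨lam, hroot, hmax, ?_, ?_⟩
  · have hray := hA.dotProduct_mulVec_le_of_isRoot_charpoly_le hmax (tildeRTestVector n)
    rw [dotProduct_adjMatrix_tildeR_mulVec_tildeRTestVector,
      dotProduct_tildeRTestVector_self] at hray
    rwa [div_le_iff₀ (by positivity)]
  · calc lam ≤ (tildeR n).maxDegree := (tildeR n).le_maxDegree_of_isRoot_charpoly_adjMatrix hroot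
      _ ≤ n + 2 := by exact_mod_cast maxDegree_tildeR_le n
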